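/- arXiv:2206.11516 — 8 statements merged into one kernel-verified Lean document; each statement's English description precedes it below -/
import Mathlib

section
/- Core bounds for the NVCG fee: if the local coalition wins, i.e. Σ_{i∈Q} ω_i φ_i ≤ φ_g, and broker i satisfies ω_i·(q−1) ≤ 1, then his NVCG fee lies in the core interval: φ_i ≤ c_i^V − Δ ≤ c_i^V (individual rationality and the VCG upper bound). -/
/-- Core bounds for the NVCG fee.
If the local coalition wins, `∑_{i∈Q} ω i * φ i ≤ φg`, and broker `i ∈ Q`
satisfies `ω i * (q - 1) ≤ 1` where `q = |Q|`, then his NVCG fee lies in the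
core interval: `φ i ≤ cV i - Δ ≤ cV i` (individual rationality and the VCG
upper bound). -/
theorem nvcg_core_bounds {ι : Type*} [DecidableEq ι]
    (Q : Finset ι) (hQ : Q.Nonempty)
    (ω φ : ι → ℝ) (hω : ∀ i ∈ Q, 0 < ω i) (φg : ℝ)
    (cV : ι → ℝ)
    (hcV : ∀ i ∈ Q, cV i = (φg - ∑ j ∈ Q.erase i, ω j * φ j) / ω i)
    (Δ : ℝ) (hΔ : Δ = (∑ i ∈ Q, ω i * cV i) - φg)
    (hwin : ∑ i ∈ Q, ω i * φ i ≤ φg)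
    (i : ι) (hi : i ∈ Q) (hωq : ω i * ((Q.card : ℝ) - 1) ≤ 1) :
    φ i ≤ cV i - Δ ∧ cV i - Δ ≤ cV i := by
  set S := ∑ j ∈ Q, ω j * φ j with hS
  have hsum : ∀ j ∈ Q, ω j * cV j = φg - S + ω j * φ j := by
    intro j hj
    have hωj := hω j hj
    rw [hcV j hj, Finset.sum_erase_eq_sub hj, ← hS]
    field_simp
    ring
  have hΔ' : Δ = ((Q.card : ℝ) - 1) * (φg - S) := by
    rw [hΔ, Finset.sum_congr rfl hsum, Finset.sum_add_distrib,
      Finset.sum_const, nsmul_eq_mul, ← hS]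
    ring
  have hωi := hω i hi
  have hci : ω i * cV i = φg - S + ω i * φ i := hsum i hi
  have hwin' : 0 ≤ φg - S := by linarith
  constructor
  · have h1 : ω i * (cV i - Δ - φ i) = (1 - ω i * ((Q.card : ℝ) - 1)) * (φg - S) := by
      rw [hΔ']; nlinarith [hci]
    nlinarith [mul_nonneg (by linarith : (0:ℝ) ≤ 1 - ω i * ((Q.card : ℝ) - 1)) hwin']
  · have hq1 : (1:ℝ) ≤ (Q.card : ℝ) := by
      exact_mod_cast Finset.card_pos.mpr hQ
    nlinarith [mul_nonneg (by linarith : (0:ℝ) ≤ (Q.card : ℝ) - 1) hwin']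
end

section
/- Comparison of the two rules: if W > 0 and S := Σ_{j∈Q^u} ω_j(φ_j^1 − c_j^V) ≥ 0, then every broker i ∈ Q^d receives a D-NVCG fee at least as large as his NVCG fee c_i^V − Δ, while every broker i ∈ Q^u receives a D-NVCG fee strictly smaller than his NVCG fee c_i^V − Δ. -/
/-- Comparison of the NVCG and D-NVCG rules.
If `W = ∑_{i∈Qᵈ} ω i > 0` and `S = ∑_{j∈Qᵘ} ω j * (φ¹ j - cV j) ≥ 0`, then
every broker `i ∈ Qᵈ` receives a D-NVCG fee at least as large as his NVCG fee
`cV i - Δ`, while every broker `i ∈ Qᵘ` receives a D-NVCG fee strictly smaller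
than his NVCG fee `cV i - Δ`. -/
theorem dnvcg_vs_nvcg {ι : Type*} [DecidableEq ι]
    (Q : Finset ι) (hQ : Q.Nonempty)
    (ω φ φ1 : ι → ℝ) (hω : ∀ i ∈ Q, 0 < ω i) (φg : ℝ)
    (cV : ι → ℝ)
    (hcV : ∀ i ∈ Q, cV i = (φg - ∑ j ∈ Q.erase i, ω j * φ j) / ω i)
    (Δ : ℝ) (hΔ : Δ = (∑ i ∈ Q, ω i * cV i) - φg)
    (Qu Qd : Finset ι)
    (hQu : Qu = Q.filter fun i => cV i < φ1 i)
    (hQd : Qd = Q.filter fun i => φ1 i ≤ cV i)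
    (W : ℝ) (hW : W = ∑ i ∈ Qd, ω i) (hWpos : 0 < W)
    (S : ℝ) (hS : S = ∑ j ∈ Qu, ω j * (φ1 j - cV j)) (hSnonneg : 0 ≤ S)
    (c : ι → ℝ)
    (hcd : ∀ i ∈ Qd, c i = cV i - Δ + S / W)
    (hcu : ∀ i ∈ Qu, c i = cV i - Δ - (φ1 i - cV i)) :
    (∀ i ∈ Qd, cV i - Δ ≤ c i) ∧ (∀ i ∈ Qu, c i < cV i - Δ) := by
  constructor
  · intro i hi
    rw [hcd i hi]
    have : 0 ≤ S / W := div_nonneg hSnonneg hWpos.le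
    linarith
  · intro i hi
    rw [hcu i hi]
    have : cV i < φ1 i := (by rw [hQu, Finset.mem_filter] at hi; exact hi.2)
    linarith
end

section
/- (Lemma on monotonicity, NVCG case) The NVCG fee of broker i, viewed as a function of his own bid, fee_i(x) := c_i^V(x) − Δ(x), is affine with slope ω_i·(q−1): for all x, y ∈ ℝ, fee_i(x) − fee_i(y) = ω_i·(q−1)·(x − y). In particular, if q ≥ 2 then fee_i is strictly increasing in broker i's own bid. -/
open Finset

/-! Each broker `j ≠ i` absorbs broker `i`'s bid as `-ω i * x` in `ω j * c_j^V(x)`, while `c_i^V`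
does not depend on `x`; hence `Δ` has slope `-(q - 1) ω i` and the fee has slope `(q - 1) ω i`. -/

theorem strictMono_of_sub_eq_mul_sub {f : ℝ → ℝ} {a : ℝ} (ha : 0 < a)
    (hf : ∀ x y, f x - f y = a * (x - y)) : StrictMono f := by
  intro x y hxy
  have := hf y x
  nlinarith

section NVCG

variable {ι : Type*} [DecidableEq ι] {Q : Finset ι} {i : ι} {ω φ : ι → ℝ} {φg : ℝ}
  {cV : ℝ → ι → ℝ}

theorem weighted_cV_sub_of_ne {j : ι} (hj : ω j ≠ 0) {x y : ℝ}
    (hx : cV x j = (φg - ω i * x - ∑ k ∈ (Q.erase i).erase j, ω k * φ k) / ω j)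
    (hy : cV y j = (φg - ω i * y - ∑ k ∈ (Q.erase i).erase j, ω k * φ k) / ω j) :
    ω j * cV x j - ω j * cV y j = ω i * (y - x) := by
  rw [hx, hy, mul_div_cancel₀ _ hj, mul_div_cancel₀ _ hj]
  ring

theorem sum_weighted_cV_sub (hi : i ∈ Q) (hω : ∀ k ∈ Q.erase i, ω k ≠ 0)
    (hcVi : ∀ x y, cV x i = cV y i)
    (hcVj : ∀ x, ∀ j ∈ Q.erase i,
      cV x j = (φg - ω i * x - ∑ k ∈ (Q.erase i).erase j, ω k * φ k) / ω j) (x y : ℝ) :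
    ∑ j ∈ Q, ω j * cV x j - ∑ j ∈ Q, ω j * cV y j = ((#Q : ℝ) - 1) * (ω i * (y - x)) := by
  have hothers : ∑ j ∈ Q.erase i, (ω j * cV x j - ω j * cV y j) = #(Q.erase i) • (ω i * (y - x)) :=
    (sum_congr rfl fun j hj ↦ weighted_cV_sub_of_ne (hω j hj) (hcVj x j hj) (hcVj y j hj)).trans
      (sum_const _)
  rw [← add_sum_erase Q _ hi, ← add_sum_erase Q _ hi, hcVi x y, add_sub_add_left_eq_sub,
    ← sum_sub_distrib, hothers, nsmul_eq_mul, card_erase_of_mem hi,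
    Nat.cast_pred (card_pos.mpr ⟨i, hi⟩)]

end NVCG

theorem nvcg_fee_monotone_general {ι : Type*} [DecidableEq ι]
    (Q : Finset ι) (i : ι) (hi : i ∈ Q)
    (ω φ : ι → ℝ) (hω : ∀ k ∈ Q, 0 < ω k) (φg : ℝ)
    (cV : ℝ → ι → ℝ)
    (hcVi : ∀ x : ℝ, cV x i = (φg - ∑ k ∈ Q.erase i, ω k * φ k) / ω i)
    (hcVj : ∀ x : ℝ, ∀ j ∈ Q.erase i,
      cV x j = (φg - ω i * x - ∑ k ∈ (Q.erase i).erase j, ω k * φ k) / ω j)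
    (Δ : ℝ → ℝ) (hΔ : ∀ x : ℝ, Δ x = (∑ j ∈ Q, ω j * cV x j) - φg)
    (fee : ℝ → ℝ) (hfee : ∀ x : ℝ, fee x = cV x i - Δ x) :
    (∀ x y : ℝ, fee x - fee y = ω i * ((Q.card : ℝ) - 1) * (x - y))
    ∧ (2 ≤ Q.card → StrictMono fee) := by
  have hcVi_const : ∀ x y, cV x i = cV y i := fun x y ↦ (hcVi x).trans (hcVi y).symm
  have hω_ne : ∀ k ∈ Q.erase i, ω k ≠ 0 := fun k hk ↦ (hω k (mem_of_mem_erase hk)).ne'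
  have hslope : ∀ x y, fee x - fee y = ω i * ((#Q : ℝ) - 1) * (x - y) := by
    intro x y
    have hsum := sum_weighted_cV_sub hi hω_ne hcVi_const hcVj x y
    rw [hfee, hfee, hΔ, hΔ, hcVi_const x y]
    linear_combination -hsum
  refine ⟨hslope, fun hq ↦ strictMono_of_sub_eq_mul_sub ?_ hslope⟩
  have hq' : (2 : ℝ) ≤ #Q := by exact_mod_cast hq
  exact mul_pos (hω i hi) (by linarith)

/-- Monotonicity lemma, NVCG case.
Fix `i ∈ Q`, the other brokers' second-round bids `φ k` (`k ≠ i`) and the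
global bid `φg`. Viewing broker `i`'s own bid as the variable `x`, set
`cV x i = (φg - ∑_{k∈Q,k≠i} ω k * φ k)/ω i` (independent of `x`),
`cV x j = (φg - ω i * x - ∑_{k∈Q,k≠i,k≠j} ω k * φ k)/ω j` for `j ≠ i`, and
`Δ x = ∑_{j∈Q} ω j * cV x j - φg`. Then the NVCG fee
`fee x = cV x i - Δ x` is affine with slope `ω i * (q - 1)`:
`fee x - fee y = ω i * (q-1) * (x - y)` for all `x y`, and if `q ≥ 2` then
`fee` is strictly increasing in broker `i`'s own bid. -/
theorem nvcg_fee_monotone {ι : Type*} [DecidableEq ι]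
    (Q : Finset ι) (hQ : Q.Nonempty) (i : ι) (hi : i ∈ Q)
    (ω φ : ι → ℝ) (hω : ∀ k ∈ Q, 0 < ω k) (φg : ℝ)
    (cV : ℝ → ι → ℝ)
    (hcVi : ∀ x : ℝ, cV x i = (φg - ∑ k ∈ Q.erase i, ω k * φ k) / ω i)
    (hcVj : ∀ x : ℝ, ∀ j ∈ Q.erase i,
      cV x j = (φg - ω i * x - ∑ k ∈ (Q.erase i).erase j, ω k * φ k) / ω j)
    (Δ : ℝ → ℝ) (hΔ : ∀ x : ℝ, Δ x = (∑ j ∈ Q, ω j * cV x j) - φg)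
    (fee : ℝ → ℝ) (hfee : ∀ x : ℝ, fee x = cV x i - Δ x) :
    (∀ x y : ℝ, fee x - fee y = ω i * ((Q.card : ℝ) - 1) * (x - y))
    ∧ (2 ≤ Q.card → StrictMono fee) :=
  nvcg_fee_monotone_general Q i hi ω φ hω φg cV hcVi hcVj Δ hΔ fee hfee
end

section
/- (Lemma on monotonicity, D-NVCG case for Q^d) Fix a subset Q^u ⊆ Q with i ∉ Q^u, let ℓ = |Q^u|, fix first-round bids φ_j^1 for j ∈ Q^u, and let W > 0. The D-NVCG fee of broker i ∈ Q^d as a function of his own bid, fee_i(x) := c_i^V(x) − Δ(x) + (Σ_{j∈Q^u} ω_j(φ_j^1 − c_j^V(x)))/W, is affine with slope ω_i·(ℓ/W + (q−1)): for all x, y ∈ ℝ, fee_i(x) − fee_i(y) = ω_i·(ℓ/W + (q−1))·(x − y); in particular it is strictly increasing in broker i's own bid when q ≥ 2. -/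
/-- Monotonicity lemma, D-NVCG case for a broker in `Qᵈ`.
Fix `i ∈ Q`, the other brokers' bids `φ k`, the global bid `φg`, a subset
`Qᵘ ⊆ Q` with `i ∉ Qᵘ`, `ℓ = |Qᵘ|`, first-round bids `φ¹ j` for `j ∈ Qᵘ`,
and `W > 0`. With `cV x i = (φg - ∑_{k∈Q,k≠i} ω k * φ k)/ω i`,
`cV x j = (φg - ω i * x - ∑_{k∈Q,k≠i,k≠j} ω k * φ k)/ω j` for `j ≠ i`,
`Δ x = ∑_{j∈Q} ω j * cV x j - φg`, the D-NVCG fee of broker `i ∈ Qᵈ`,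
`fee x = cV x i - Δ x + (∑_{j∈Qᵘ} ω j * (φ¹ j - cV x j))/W`, is affine with
slope `ω i * (ℓ/W + (q-1))`; in particular it is strictly increasing in
broker `i`'s own bid when `q ≥ 2`. -/
theorem dnvcg_fee_monotone_Qd {ι : Type*} [DecidableEq ι]
    (Q : Finset ι) (hQ : Q.Nonempty) (i : ι) (hi : i ∈ Q)
    (ω φ φ1 : ι → ℝ) (hω : ∀ k ∈ Q, 0 < ω k) (φg : ℝ)
    (Qu : Finset ι) (hQuQ : Qu ⊆ Q) (hiQu : i ∉ Qu)
    (W : ℝ) (hWpos : 0 < W)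
    (cV : ℝ → ι → ℝ)
    (hcVi : ∀ x : ℝ, cV x i = (φg - ∑ k ∈ Q.erase i, ω k * φ k) / ω i)
    (hcVj : ∀ x : ℝ, ∀ j ∈ Q.erase i,
      cV x j = (φg - ω i * x - ∑ k ∈ (Q.erase i).erase j, ω k * φ k) / ω j)
    (Δ : ℝ → ℝ) (hΔ : ∀ x : ℝ, Δ x = (∑ j ∈ Q, ω j * cV x j) - φg)
    (fee : ℝ → ℝ)
    (hfee : ∀ x : ℝ,
      fee x = cV x i - Δ x + (∑ j ∈ Qu, ω j * (φ1 j - cV x j)) / W) :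
    (∀ x y : ℝ,
      fee x - fee y = ω i * ((Qu.card : ℝ) / W + ((Q.card : ℝ) - 1)) * (x - y))
    ∧ (2 ≤ Q.card → StrictMono fee) := by
  -- key: weighted difference of cV at j ≠ i
  have key : ∀ x y : ℝ, ∀ j ∈ Q.erase i,
      ω j * (cV x j - cV y j) = -(ω i * (x - y)) := by
    intro x y j hj
    have hωj : ω j ≠ 0 := (hω j (Finset.mem_of_mem_erase hj)).ne'
    rw [hcVj x j hj, hcVj y j hj]
    field_simp
    ring
  have main : ∀ x y : ℝ,
      fee x - fee y = ω i * ((Qu.card : ℝ) / W + ((Q.card : ℝ) - 1)) * (x - y) := by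
    intro x y
    have hΔdiff : Δ x - Δ y = -(((Q.card : ℝ) - 1) * (ω i * (x - y))) := by
      rw [hΔ x, hΔ y]
      have : (∑ j ∈ Q, ω j * cV x j) - ∑ j ∈ Q, ω j * cV y j
          = ∑ j ∈ Q, ω j * (cV x j - cV y j) := by
        rw [← Finset.sum_sub_distrib]; exact Finset.sum_congr rfl (by intro j _; ring)
      have hsplit : ∑ j ∈ Q, ω j * (cV x j - cV y j)
          = ω i * (cV x i - cV y i) + ∑ j ∈ Q.erase i, ω j * (cV x j - cV y j) :=
        (Finset.add_sum_erase Q _ hi).symm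
      have hci : cV x i - cV y i = 0 := by rw [hcVi x, hcVi y]; ring
      have hrest : ∑ j ∈ Q.erase i, ω j * (cV x j - cV y j)
          = ((Q.card : ℝ) - 1) * (-(ω i * (x - y))) := by
        rw [Finset.sum_congr rfl (key x y), Finset.sum_const, nsmul_eq_mul,
          Finset.card_erase_of_mem hi]
        have h1 : 1 ≤ Q.card := Finset.card_pos.mpr hQ
        push_cast [Nat.cast_sub h1]
        ring
      have := hsplit
      rw [hci, mul_zero, zero_add, hrest] at this
      have goal : (∑ j ∈ Q, ω j * cV x j) - φg - ((∑ j ∈ Q, ω j * cV y j) - φg)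
          = (∑ j ∈ Q, ω j * cV x j) - ∑ j ∈ Q, ω j * cV y j := by ring
      rw [goal, ‹(∑ j ∈ Q, ω j * cV x j) - ∑ j ∈ Q, ω j * cV y j = _›, this]
      ring
    have hQu : ∑ j ∈ Qu, ω j * (φ1 j - cV x j) - ∑ j ∈ Qu, ω j * (φ1 j - cV y j)
        = (Qu.card : ℝ) * (ω i * (x - y)) := by
      have : ∑ j ∈ Qu, ω j * (φ1 j - cV x j) - ∑ j ∈ Qu, ω j * (φ1 j - cV y j)
          = ∑ j ∈ Qu, (-(ω j * (cV x j - cV y j))) := by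
        rw [← Finset.sum_sub_distrib]; exact Finset.sum_congr rfl (by intro j _; ring)
      rw [this, Finset.sum_congr rfl (fun j hj => by
        rw [key x y j (Finset.mem_erase.mpr ⟨fun h => hiQu (h ▸ hj), hQuQ hj⟩)]),
        Finset.sum_const, nsmul_eq_mul]
      ring
    have hci : cV x i - cV y i = 0 := by rw [hcVi x, hcVi y]; ring
    rw [hfee x, hfee y]
    have : cV x i - Δ x + (∑ j ∈ Qu, ω j * (φ1 j - cV x j)) / W
        - (cV y i - Δ y + (∑ j ∈ Qu, ω j * (φ1 j - cV y j)) / W)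
        = (cV x i - cV y i) - (Δ x - Δ y)
          + ((∑ j ∈ Qu, ω j * (φ1 j - cV x j)) - ∑ j ∈ Qu, ω j * (φ1 j - cV y j)) / W := by
      ring
    rw [this, hci, hΔdiff, hQu]
    field_simp
    ring
  refine ⟨main, fun hq => ?_⟩
  intro x y hxy
  have hslope : 0 < ω i * ((Qu.card : ℝ) / W + ((Q.card : ℝ) - 1)) := by
    have h1 : (0:ℝ) ≤ (Qu.card : ℝ) / W := div_nonneg (Nat.cast_nonneg _) hWpos.le
    have h2 : (1:ℝ) ≤ (Q.card : ℝ) - 1 := by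
      have : (2:ℝ) ≤ (Q.card : ℝ) := by exact_mod_cast hq
      linarith
    exact mul_pos (hω i hi) (by linarith)
  have := main y x
  nlinarith [main y x, mul_pos hslope (sub_pos.mpr hxy)]
end

section
/- (Lemma on monotonicity, D-NVCG case for Q^u) Fix broker i's first-round bid φ_i^1. The D-NVCG fee of broker i ∈ Q^u as a function of his own second-round bid, fee_i(x) := c_i^V(x) − Δ(x) − (φ_i^1 − c_i^V(x)), is affine with slope ω_i·(q−1): for all x, y ∈ ℝ, fee_i(x) − fee_i(y) = ω_i·(q−1)·(x − y); in particular it is strictly increasing in broker i's own bid when q ≥ 2. -/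
/-- Monotonicity lemma, D-NVCG case for a broker in `Qᵘ`.
Fix `i ∈ Q`, the other brokers' bids `φ k`, the global bid `φg`, and broker
`i`'s first-round bid `φ¹ᵢ`. With `cV x i = (φg - ∑_{k∈Q,k≠i} ω k * φ k)/ω i`,
`cV x j = (φg - ω i * x - ∑_{k∈Q,k≠i,k≠j} ω k * φ k)/ω j` for `j ≠ i`, and
`Δ x = ∑_{j∈Q} ω j * cV x j - φg`, the D-NVCG fee of broker `i ∈ Qᵘ`,
`fee x = cV x i - Δ x - (φ¹ᵢ - cV x i)`, is affine with slope `ω i * (q-1)`: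
`fee x - fee y = ω i * (q-1) * (x - y)` for all `x y`; in particular it is
strictly increasing in broker `i`'s own bid when `q ≥ 2`. -/
theorem dnvcg_fee_monotone_Qu {ι : Type*} [DecidableEq ι]
    (Q : Finset ι) (hQ : Q.Nonempty) (i : ι) (hi : i ∈ Q)
    (ω φ : ι → ℝ) (hω : ∀ k ∈ Q, 0 < ω k) (φg : ℝ) (φ1i : ℝ)
    (cV : ℝ → ι → ℝ)
    (hcVi : ∀ x : ℝ, cV x i = (φg - ∑ k ∈ Q.erase i, ω k * φ k) / ω i)
    (hcVj : ∀ x : ℝ, ∀ j ∈ Q.erase i,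
      cV x j = (φg - ω i * x - ∑ k ∈ (Q.erase i).erase j, ω k * φ k) / ω j)
    (Δ : ℝ → ℝ) (hΔ : ∀ x : ℝ, Δ x = (∑ j ∈ Q, ω j * cV x j) - φg)
    (fee : ℝ → ℝ)
    (hfee : ∀ x : ℝ, fee x = cV x i - Δ x - (φ1i - cV x i)) :
    (∀ x y : ℝ, fee x - fee y = ω i * ((Q.card : ℝ) - 1) * (x - y))
    ∧ (2 ≤ Q.card → StrictMono fee) := by

  have key : ∀ x y : ℝ, fee x - fee y = ω i * ((Q.card : ℝ) - 1) * (x - y) := by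
    intro x y
    have hdiff : ∀ j ∈ Q.erase i, ω j * cV x j - ω j * cV y j = -(ω i * (x - y)) := by
      intro j hj
      have hjQ : j ∈ Q := Finset.mem_of_mem_erase hj
      have hωj : ω j ≠ 0 := (hω j hjQ).ne'
      rw [hcVj x j hj, hcVj y j hj]
      field_simp
      ring
    have hsum : (∑ j ∈ Q, ω j * cV x j) - (∑ j ∈ Q, ω j * cV y j)
        = -(ω i * ((Q.card : ℝ) - 1) * (x - y)) := by
      rw [← Finset.sum_sub_distrib]
      rw [← Finset.add_sum_erase Q _ hi]
      have : ∑ j ∈ Q.erase i, (ω j * cV x j - ω j * cV y j)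
          = ∑ j ∈ Q.erase i, -(ω i * (x - y)) := Finset.sum_congr rfl hdiff
      rw [this, Finset.sum_const, hcVi x, hcVi y]
      have hcard : ((Q.erase i).card : ℝ) = (Q.card : ℝ) - 1 := by
        rw [Finset.card_erase_of_mem hi]
        have : 1 ≤ Q.card := Finset.card_pos.mpr hQ
        push_cast [Nat.cast_sub this]
        ring
      rw [nsmul_eq_mul, hcard]
      ring
    rw [hfee x, hfee y, hΔ x, hΔ y, hcVi x, hcVi y]
    have := hsum
    linarith
  refine ⟨key, fun hq => ?_⟩
  intro x y hxy
  have hpos : 0 < ω i * ((Q.card : ℝ) - 1) * (y - x) := by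
    apply mul_pos
    · apply mul_pos (hω i hi)
      have : (2:ℝ) ≤ (Q.card : ℝ) := by exact_mod_cast hq
      linarith
    · linarith
  have := key y x
  linarith
end

section
/- (Lemma: weakly dominant strategy of the global broker) Let P > 0, υ > 0, and B ≥ 0. Then bidding min(B, υ) weakly dominates every bid b ∈ [0, B]: for all b with 0 ≤ b ≤ B and all T ∈ ℝ, u(min(B, υ), T) ≥ u(b, T). -/
/-- Weakly dominant strategy of the global broker.
The global broker, with portfolio trading value `P > 0`, private valuation
`υ > 0` and first-round bid `B ≥ 0`, wins with a second-round bid `b` exactly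
when `b < T` (where `T` is the locals' weighted aggregate bid), in which case
his payoff is `u b T = P * (T - υ)`, and `u b T = 0` otherwise. Then bidding
`min B υ` weakly dominates every bid `b ∈ [0, B]`:
for all `0 ≤ b ≤ B` and all `T`, `u (min B υ) T ≥ u b T`. -/
theorem global_broker_dominant_strategy
    (P υ B : ℝ) (hP : 0 < P) (hυ : 0 < υ) (hB : 0 ≤ B)
    (u : ℝ → ℝ → ℝ)
    (hu : ∀ b T : ℝ, u b T = if b < T then P * (T - υ) else 0) :
    ∀ b : ℝ, 0 ≤ b → b ≤ B → ∀ T : ℝ, u (min B υ) T ≥ u b T := by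
  intro b hb0 hbB T
  rw [hu, hu]
  split_ifs with h1 h2 h2
  · exact le_refl _
  · -- min B υ < T, ¬ b < T : need P*(T-υ) ≥ 0; T ≤ b ≤ B so min = υ < T
    have hTB : T ≤ B := le_trans (le_of_not_gt h2) hbB
    have : υ < T := by
      rcases min_cases B υ with ⟨he, _⟩ | ⟨he, _⟩
      · linarith [he ▸ h1]
      · linarith [he ▸ h1]
    nlinarith
  · -- ¬ min < T, b < T : min ≥ T so υ ≥ T, so P*(T-υ) ≤ 0
    have : T ≤ υ := le_trans (le_of_not_gt h1) (min_le_right B υ)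
    nlinarith
  · exact le_refl _
end

section
/- (Theorem 4.1(a): NVCG equilibrium bid) Let A > 0, ω > 0, q ≥ 2, α, φ₀, κ ∈ ℝ, and H : ℝ → ℝ differentiable at φ₀ with derivative h > 0. Suppose the commission function is the affine NVCG fee c(φ) = κ + ω·(q−1)·φ, that c(φ₀) = φ₀ (pivotal pricing), and that the payoff π(φ) = A·(c(φ) − α)·H(φ) has derivative 0 at φ₀. Then φ₀ = α − ω·(q−1)·H(φ₀)/h. -/
/-- Theorem 4.1(a): NVCG equilibrium bid.
Let `A > 0` be the trading value, `ω > 0` the package weight, `q ≥ 2` the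
number of packages, `α` the valuation, and `H` the winning probability,
differentiable at `φ₀` with derivative `h > 0`. Suppose the commission is the
affine NVCG fee `c φ = κ + ω * (q-1) * φ`, that `c φ₀ = φ₀` (pivotal pricing),
and that the payoff `π φ = A * (c φ - α) * H φ` has derivative `0` at `φ₀`.
Then `φ₀ = α - ω * (q-1) * H φ₀ / h`. -/
theorem nvcg_equilibrium_bid
    (A ω α φ₀ κ h : ℝ) (q : ℕ) (hA : 0 < A) (hω : 0 < ω) (hq : 2 ≤ q)
    (H : ℝ → ℝ) (hH : HasDerivAt H h φ₀) (hh : 0 < h)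
    (c : ℝ → ℝ) (hc : ∀ φ : ℝ, c φ = κ + ω * ((q : ℝ) - 1) * φ)
    (hpiv : c φ₀ = φ₀)
    (hπ : HasDerivAt (fun φ => A * (c φ - α) * H φ) 0 φ₀) :
    φ₀ = α - ω * ((q : ℝ) - 1) * H φ₀ / h := by
  have hcderiv : HasDerivAt (fun φ => A * (c φ - α)) (A * (ω * ((q : ℝ) - 1))) φ₀ := by
    have : HasDerivAt (fun φ : ℝ => A * (κ + ω * ((q : ℝ) - 1) * φ - α))
        (A * (ω * ((q : ℝ) - 1))) φ₀ := by
      have h1 : HasDerivAt (fun φ : ℝ => κ + ω * ((q : ℝ) - 1) * φ - α)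
          (ω * ((q : ℝ) - 1)) φ₀ := by
        simpa using (((hasDerivAt_id φ₀).const_mul (ω * ((q : ℝ) - 1))).const_add κ).sub_const α
      simpa using h1.const_mul A
    exact this.congr_of_eventuallyEq (Filter.Eventually.of_forall fun x => by simp [hc])
  have hmul := hcderiv.mul hH
  have huniq := hπ.unique hmul
  have key : A * (ω * ((q : ℝ) - 1)) * H φ₀ + A * (c φ₀ - α) * h = 0 := huniq.symm
  rw [hpiv] at key
  have hA' := hA.ne'
  have hh' := hh.ne'
  field_simp
  nlinarith [key]
end

section
/- (Theorem 4.1(b): D-NVCG equilibrium bid for a broker with φ^1 ≤ c^V) Let A > 0, ω > 0, q ≥ 2, W > 0, ℓ ≥ 0, α, φ₀, κ ∈ ℝ, and H : ℝ → ℝ differentiable at φ₀ with derivative h > 0. Suppose the commission function is the affine D-NVCG fee c(φ) = κ + ω·(ℓ/W + (q−1))·φ, that c(φ₀) = φ₀ (pivotal pricing), and that the payoff π(φ) = A·(c(φ) − α)·H(φ) has derivative 0 at φ₀. Then φ₀ = α − ω·(ℓ/W + (q−1))·H(φ₀)/h. -/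
theorem hasDerivAt_markup_mul {A α s h x : ℝ} {c H : ℝ → ℝ}
    (hc : HasDerivAt c s x) (hH : HasDerivAt H h x) :
    HasDerivAt (fun φ => A * (c φ - α) * H φ) (A * (s * H x + (c x - α) * h)) x :=
  (((hc.sub_const α).const_mul A).mul hH).congr_deriv (by ring)

theorem markup_eq_of_hasDerivAt_markup_mul_zero {A α s h x : ℝ} {c H : ℝ → ℝ}
    (hc : HasDerivAt c s x) (hH : HasDerivAt H h x) (hA : A ≠ 0) (hh : h ≠ 0)
    (hπ : HasDerivAt (fun φ => A * (c φ - α) * H φ) 0 x) :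
    c x = α - s * H x / h := by
  have hfoc : s * H x + (c x - α) * h = 0 := by
    simpa [hA] using (hasDerivAt_markup_mul (A := A) (α := α) hc hH).unique hπ
  field_simp
  linarith

theorem dnvcg_equilibrium_bid_general
    (A ω W α φ₀ κ h : ℝ) (q ℓ : ℕ) (hA : 0 < A)
    (H : ℝ → ℝ) (hH : HasDerivAt H h φ₀) (hh : 0 < h)
    (c : ℝ → ℝ)
    (hc : ∀ φ : ℝ, c φ = κ + ω * ((ℓ : ℝ) / W + ((q : ℝ) - 1)) * φ)
    (hpiv : c φ₀ = φ₀)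
    (hπ : HasDerivAt (fun φ => A * (c φ - α) * H φ) 0 φ₀) :
    φ₀ = α - ω * ((ℓ : ℝ) / W + ((q : ℝ) - 1)) * H φ₀ / h := by
  have hc' : HasDerivAt c (ω * ((ℓ : ℝ) / W + ((q : ℝ) - 1))) φ₀ := by
    rw [funext hc]
    simpa using ((hasDerivAt_id φ₀).const_mul _).const_add κ
  rw [← markup_eq_of_hasDerivAt_markup_mul_zero hc' hH hA.ne' hh.ne' hπ, hpiv]

/-- Theorem 4.1(b): D-NVCG equilibrium bid for a broker with
`φ¹ ≤ cV`. Let `A > 0` be the trading value, `ω > 0` the package weight,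
`q ≥ 2` the number of packages, `ℓ ≥ 0` the number of first-round overbidders,
`W > 0` the total weight of the non-overbidders, `α` the valuation, and `H`
the winning probability, differentiable at `φ₀` with derivative `h > 0`.
Suppose the commission is the affine D-NVCG fee
`c φ = κ + ω * (ℓ/W + (q-1)) * φ`, that `c φ₀ = φ₀` (pivotal pricing), and
that the payoff `π φ = A * (c φ - α) * H φ` has derivative `0` at `φ₀`.
Then `φ₀ = α - ω * (ℓ/W + (q-1)) * H φ₀ / h`. -/
theorem dnvcg_equilibrium_bid
    (A ω W α φ₀ κ h : ℝ) (q ℓ : ℕ) (hA : 0 < A) (hω : 0 < ω) (hq : 2 ≤ q)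
    (hW : 0 < W)
    (H : ℝ → ℝ) (hH : HasDerivAt H h φ₀) (hh : 0 < h)
    (c : ℝ → ℝ)
    (hc : ∀ φ : ℝ, c φ = κ + ω * ((ℓ : ℝ) / W + ((q : ℝ) - 1)) * φ)
    (hpiv : c φ₀ = φ₀)
    (hπ : HasDerivAt (fun φ => A * (c φ - α) * H φ) 0 φ₀) :
    φ₀ = α - ω * ((ℓ : ℝ) / W + ((q : ℝ) - 1)) * H φ₀ / h :=
  dnvcg_equilibrium_bid_general A ω W α φ₀ κ h q ℓ hA H hH hh c hc hpiv hπ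
end
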